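/- arXiv:2101.08081 — 2 statements merged into one kernel-verified Lean document; each statement's English description precedes it below -/
import Mathlib

section
/- Let $a, b : \mathrm{Fin}\ l \to \mathbb{R}$, and for $c \in \mathbb{F}_2^l$ define $L(c) = \sum_{j} (\text{if } c_j = 0 \text{ then } a_j \text{ else } b_j)$ and $Q(c) = \sum_j \varepsilon(c_j)(a_j - b_j)$ with $\varepsilon(0) = 1$, $\varepsilon(1) = -1$. Then for any nonempty finite sets $A, B \subseteq \mathbb{F}_2^l$, $\max_{c \in A} L(c) - \max_{c \in B} L(c) = \tfrac{1}{2}\left(\max_{c \in A} Q(c) - \max_{c \in B} Q(c)\right)$. -/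
/-- The log-likelihood sum `L(c) = ∑_j (if c_j = 0 then a_j else b_j)`. -/
noncomputable def llSum (l : ℕ) (a b : Fin l → ℝ) (c : Fin l → ZMod 2) : ℝ :=
  ∑ j, if c j = 0 then a j else b j

/-- The sign `ε(0) = 1`, `ε(1) = -1`. -/
noncomputable def eps (x : ZMod 2) : ℝ := if x = 0 then 1 else -1

/-- The correlation `Q(c) = ∑_j ε(c_j) (a_j - b_j)`. -/
noncomputable def corr (l : ℕ) (a b : Fin l → ℝ) (c : Fin l → ZMod 2) : ℝ :=
  ∑ j, eps (c j) * (a j - b j)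

lemma key (l : ℕ) (a b : Fin l → ℝ) (c : Fin l → ZMod 2) :
    llSum l a b c = corr l a b c / 2 + (∑ j, (a j + b j)) / 2 := by
  simp only [llSum, corr, eps, Finset.sum_div, ← Finset.sum_add_distrib]
  apply Finset.sum_congr rfl
  intro j _
  split <;> ring

lemma sup'_key (l : ℕ) (a b : Fin l → ℝ) (A : Finset (Fin l → ZMod 2)) (hA : A.Nonempty) :
    A.sup' hA (llSum l a b) = A.sup' hA (corr l a b) / 2 + (∑ j, (a j + b j)) / 2 := by
  apply le_antisymm
  · apply Finset.sup'_le
    intro c hc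
    rw [key]
    gcongr
    exact Finset.le_sup' _ hc
  · obtain ⟨c, hc, hce⟩ := Finset.exists_mem_eq_sup' hA (corr l a b)
    rw [hce, ← key]
    exact Finset.le_sup' _ hc

/-- For any nonempty finite sets `A, B ⊆ 𝔽₂ˡ`,
`max_{c ∈ A} L(c) - max_{c ∈ B} L(c) = ½ (max_{c ∈ A} Q(c) - max_{c ∈ B} Q(c))`. -/
theorem max_llSum_sub_eq_half_max_corr_sub (l : ℕ) (a b : Fin l → ℝ)
    (A B : Finset (Fin l → ZMod 2)) (hA : A.Nonempty) (hB : B.Nonempty) :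
    A.sup' hA (llSum l a b) - B.sup' hB (llSum l a b) =
      (A.sup' hA (corr l a b) - B.sup' hB (corr l a b)) / 2 := by
  rw [sup'_key, sup'_key]; ring
end

section
/- Let $S \subseteq \mathbb{F}_2^n$ be a submodule, let $g : \mathrm{Fin}\ k \to \mathbb{F}_2^n$ be vectors linearly independent modulo $S$, and let $\bar{g} : \mathrm{Fin}\ \bar{k} \to \mathbb{F}_2^n$ with $\bar{k} \le k$. Fix $t \le \bar{k}$ and suppose the nesting conditions hold: $\bar{g}_j = g_j$ for all $j < t$, and $\bar{g}_j \in \mathrm{span}\{g_s : t \le s < k\} + S$ for all $j$ with $t \le j < \bar{k}$. Then for every $\bar{u} \in \mathbb{F}_2^{\bar{k}}$, the unique $u \in \mathbb{F}_2^{k}$ satisfying $\sum_j \bar{u}_j \bar{g}_j - \sum_j u_j g_j \in S$ has $u_j = \bar{u}_j$ for all $j < t$. -/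
/-!
Reduce the identity `∑ ūⱼ ḡⱼ ≡ ∑ uⱼ gⱼ (mod S)` using the nesting: the first `t` terms on the left
are `∑_{j<t} ūⱼ gⱼ` and the rest lie in `span{g_s : s ≥ t} + S`. Hence `∑ (u - ū')ⱼ gⱼ`, where `ū'`
is `ū` truncated to its first `t` coordinates, lies in `span{g_s : s ≥ t} + S`. Writing the span
element as a combination of the `g_s`, `s ≥ t`, independence modulo `S` shows that `u - ū'`
vanishes below `t`.
-/

open Finset Submodule

theorem Submodule.exists_fun_of_mem_span_image {R M ι : Type*} [Semiring R] [AddCommMonoid M]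
    [Module R M] [Fintype ι] {v : ι → M} {T : Set ι} {x : M} (hx : x ∈ span R (v '' T)) :
    ∃ c : ι → R, (∀ i ∉ T, c i = 0) ∧ ∑ i, c i • v i = x := by
  obtain ⟨l, hl, rfl⟩ := (Finsupp.mem_span_image_iff_linearCombination R).1 hx
  refine ⟨l, (Finsupp.mem_supported' R l).1 hl, ?_⟩
  rw [Finsupp.linearCombination_apply, Finsupp.sum_fintype _ _ fun i => zero_smul R (v i)]

theorem eq_zero_of_sum_smul_mem_span_image_sup {R M ι : Type*} [Ring R] [AddCommGroup M]
    [Module R M] [Fintype ι] {S : Submodule R M} {g : ι → M}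
    (hg : ∀ u : ι → R, ∑ i, u i • g i ∈ S → u = 0) {T : Set ι} {u : ι → R}
    (hu : ∑ i, u i • g i ∈ span R (g '' T) ⊔ S) {i : ι} (hi : i ∉ T) : u i = 0 := by
  obtain ⟨m, hm, s, hs, hms⟩ := mem_sup.1 hu
  obtain ⟨c, hcT, rfl⟩ := exists_fun_of_mem_span_image hm
  have hdiff : ∑ i, (u - c) i • g i ∈ S := by
    simpa only [Pi.sub_apply, sub_smul, sum_sub_distrib, ← hms, add_sub_cancel_left] using hs
  rw [← hcT i hi, ← sub_eq_zero]
  exact congrFun (hg _ hdiff) i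

theorem Fin.sum_dite_lt {M : Type*} [AddCommMonoid M] {t m : ℕ} (h : t ≤ m) (F : Fin t → M) :
    ∑ i : Fin m, (if hi : (i : ℕ) < t then F ⟨i, hi⟩ else 0) = ∑ j, F j := by
  refine (Fintype.sum_of_injective (Fin.castLE h) (Fin.castLE_injective h) _ _ ?_ ?_).symm
  · intro i hi
    rw [dif_neg]
    exact fun hit => hi ⟨⟨i, hit⟩, rfl⟩
  · intro j
    simp

/-- Lemma 2 (coordinate-preservation claim): if the first `t` of the vectors
`ḡ` coincide with the first `t` of the vectors `g`, and the remaining `ḡ_j`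
lie in `span{g_s : t ≤ s} + S`, then the unique `u` with
`∑ ū_j ḡ_j - ∑ u_j g_j ∈ S` satisfies `u_j = ū_j` for all `j < t`. -/
theorem nested_index_preserves_prefix (n k kb t : ℕ)
    (htkb : t ≤ kb) (hkbk : kb ≤ k)
    (S : Submodule (ZMod 2) (Fin n → ZMod 2))
    (g : Fin k → (Fin n → ZMod 2)) (gb : Fin kb → (Fin n → ZMod 2))
    (hg : ∀ u : Fin k → ZMod 2, (∑ j, u j • g j) ∈ S → u = 0)
    (hpre : ∀ j : ℕ, ∀ hj : j < t, gb ⟨j, by omega⟩ = g ⟨j, by omega⟩)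
    (hrest : ∀ j : Fin kb, t ≤ (j : ℕ) →
      gb j ∈ Submodule.span (ZMod 2)
          {r : Fin n → ZMod 2 | ∃ s : Fin k, t ≤ (s : ℕ) ∧ r = g s} ⊔ S) :
    ∀ ub : Fin kb → ZMod 2, ∀ u : Fin k → ZMod 2,
      (∑ j, ub j • gb j) - (∑ j, u j • g j) ∈ S →
        ∀ j : ℕ, ∀ hj : j < t, u ⟨j, by omega⟩ = ub ⟨j, by omega⟩ := by
  intro ub u hE j hj
  have himage : {r : Fin n → ZMod 2 | ∃ s : Fin k, t ≤ (s : ℕ) ∧ r = g s}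
      = g '' {s | t ≤ (s : ℕ)} := by
    ext r
    simp [eq_comm]
  rw [himage] at hrest
  set ub' : Fin k → ZMod 2 := fun i => if hi : (i : ℕ) < t then ub ⟨i, by omega⟩ else 0
  have hprefix : ∑ i, ub' i • g i = ∑ i : Fin kb, if hi : (i : ℕ) < t then ub i • gb i else 0 := by
    calc ∑ i, ub' i • g i
        = ∑ i : Fin t, ub ⟨i, by omega⟩ • g ⟨i, by omega⟩ := by
          simp only [ub', dite_smul, zero_smul]
          exact Fin.sum_dite_lt (htkb.trans hkbk) fun i => ub ⟨i, by omega⟩ • g ⟨i, by omega⟩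
      _ = ∑ i : Fin t, ub ⟨i, by omega⟩ • gb ⟨i, by omega⟩ :=
          sum_congr rfl fun i _ => by rw [hpre i i.2]
      _ = _ := (Fin.sum_dite_lt htkb _).symm
  have htail :
      ∑ i, ub i • gb i - ∑ i, ub' i • g i ∈ span (ZMod 2) (g '' {s | t ≤ (s : ℕ)}) ⊔ S := by
    rw [hprefix, ← sum_sub_distrib]
    refine sum_mem fun i _ => ?_
    split_ifs with hi
    · simp
    · simpa using smul_mem _ (ub i) (hrest i (not_lt.1 hi))
  have hmem : ∑ i, (u - ub') i • g i ∈ span (ZMod 2) (g '' {s | t ≤ (s : ℕ)}) ⊔ S := by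
    have := sub_mem htail (mem_sup_right hE)
    simpa only [Pi.sub_apply, sub_smul, sum_sub_distrib, sub_sub_sub_cancel_left] using this
  have hcoeff := eq_zero_of_sum_smul_mem_span_image_sup hg hmem (i := ⟨j, by omega⟩)
    (by simpa using hj)
  simpa [ub', hj, sub_eq_zero] using hcoeff
end
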